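/- Let n ≥ 3, m ≥ 1 and N = nm−m+1. If x ∈ V and there is a restricted sectional path of length m in Γ(D_N,1) from x to a vertex y, then y ∈ V. -/
import Mathlib


/-!
Common combinatorial definitions for the translation quivers of
Baur–Marsh, "A geometric description of the m-cluster categories of type Dₙ".

* `DLab` is the type of second coordinates of vertices of a type-`D` translation
  quiver: `DLab.z false` is the label `0`, `DLab.z true` is the label `0̄`, and
  `DLab.pos j` is the (unbarred) label `j ≥ 1`.
* `DVertex N h` is the vertex set `ℤ/N × {0, 0̄, 1, …, h−2}`.
* `DArrow N h` is the arrow relation of the translation quiver with `N` columns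
  and labels `0, 0̄, 1, …, h−2`.
* `DTau N c` is the translation: `(i,j) ↦ (i−1, j̄)` when `i = 0`, `j ∈ {0,0̄}` and
  `c` is odd, and `(i,j) ↦ (i−1,j)` otherwise.

With these conventions, `Γ(D_N, 1)` is `(DVertex N N, DArrow N N, DTau N N)`
and `Γ(D_n, m)` is
`(DVertex (n*m−m+1) n, DArrow (n*m−m+1) n, DTau (n*m−m+1) (n*m))`.
-/

/-- Labels `0` (= `z false`), `0̄` (= `z true`) and `j ≥ 1` (= `pos j`). -/
inductive DLab : Type
  | z : Bool → DLab
  | pos : ℕ → DLab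
deriving DecidableEq

/-- The bar operation on labels: swaps `0` and `0̄`, fixes all other labels. -/
def DLab.bar : DLab → DLab
  | .z b => .z (!b)
  | .pos j => .pos j

/-- The vertex set `ℤ/N × {0, 0̄, 1, …, h−2}`. -/
def DVertex (N h : ℕ) : Set (ZMod N × DLab) :=
  {v | ∀ j : ℕ, v.2 = DLab.pos j → 1 ≤ j ∧ j ≤ h - 2}

/-- The arrows `(i,j) → (i,j−1)` and `(i,j−1) → (i+1,j)` for `1 ≤ j ≤ h−2`,
together with `(i,1) → (i,0̄)` and `(i,0̄) → (i+1,1)`. -/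
inductive DArrow (N h : ℕ) : ZMod N × DLab → ZMod N × DLab → Prop
  | down (i : ZMod N) (j : ℕ) (h1 : 2 ≤ j) (h2 : j ≤ h - 2) :
      DArrow N h (i, DLab.pos j) (i, DLab.pos (j - 1))
  | toZ (i : ZMod N) (b : Bool) :
      DArrow N h (i, DLab.pos 1) (i, DLab.z b)
  | fromZ (i : ZMod N) (b : Bool) :
      DArrow N h (i, DLab.z b) (i + 1, DLab.pos 1)
  | up (i : ZMod N) (j : ℕ) (h1 : 1 ≤ j) (h2 : j + 1 ≤ h - 2) :
      DArrow N h (i, DLab.pos j) (i + 1, DLab.pos (j + 1))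

/-- The translation `τ(i,j) = (i−1, j̄)` if `i = 0`, `j ∈ {0,0̄}` and `c` is odd,
and `τ(i,j) = (i−1, j)` otherwise.  For `Γ(D_N,1)` one takes `c = N`; for
`Γ(D_n,m)` one takes `c = n*m` (and `N = n*m−m+1`). -/
def DTau (N c : ℕ) : ZMod N × DLab → ZMod N × DLab := fun v =>
  match v with
  | (i, DLab.z b) =>
      if i = 0 ∧ c % 2 = 1 then (i - 1, DLab.z (!b)) else (i - 1, DLab.z b)
  | (i, DLab.pos j) => (i - 1, DLab.pos j)

/-- `p 0 → p 1 → ⋯ → p m` is a path in `Γ(D_N,1)`. -/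
def IsPath (N m : ℕ) (p : ℕ → ZMod N × DLab) : Prop :=
  ∀ k, k < m → DArrow N N (p k) (p (k + 1))

/-- `p 0 → p 1 → ⋯ → p m` is a sectional path in `Γ(D_N,1)`:
`τ (p (k+1)) ≠ p (k−1)` for `1 ≤ k ≤ m − 1`. -/
def IsSectional (N m : ℕ) (p : ℕ → ZMod N × DLab) : Prop :=
  IsPath N m p ∧ ∀ k, 1 ≤ k → k + 1 ≤ m → DTau N N (p (k + 1)) ≠ p (k - 1)

/-- The extra condition defining restricted paths: there is no `1 ≤ k ≤ m−1`
such that for some `r`, `p (k+1) = (r, 0)` and `p (k−1) = (r−1, 0̄)`, or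
`p (k+1) = (r, 0̄)` and `p (k−1) = (r−1, 0)`. -/
def NoForbidden (N m : ℕ) (p : ℕ → ZMod N × DLab) : Prop :=
  ¬ ∃ k, 1 ≤ k ∧ k + 1 ≤ m ∧ ∃ r : ZMod N,
      ((p (k + 1) = (r, DLab.z false) ∧ p (k - 1) = (r - 1, DLab.z true)) ∨
       (p (k + 1) = (r, DLab.z true) ∧ p (k - 1) = (r - 1, DLab.z false)))

/-- `p 0 → p 1 → ⋯ → p m` is a restricted sectional path in `Γ(D_N,1)`. -/
def IsRestricted (N m : ℕ) (p : ℕ → ZMod N × DLab) : Prop :=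
  IsSectional N m p ∧ NoForbidden N m p

/-- There is a restricted sectional path of length `m` from `x` to `y` in
`Γ(D_N,1)`; these are exactly the arrows `x → y` of the restricted `m`-th power
`μ_m(Γ(D_N,1))`. -/
def RSPath (N m : ℕ) (x y : ZMod N × DLab) : Prop :=
  ∃ p : ℕ → ZMod N × DLab, IsRestricted N m p ∧ p 0 = x ∧ p m = y

/-- The set `V = {(r,s) : s ∈ {0,0̄} or m ∣ s}` inside the vertex set of
`Γ(D_N,1)`. -/
def VSet (N m : ℕ) : Set (ZMod N × DLab) :=
  {v | v ∈ DVertex N N ∧ ∀ j : ℕ, v.2 = DLab.pos j → m ∣ j}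

/-- The map `σ'` from the vertex set of `Γ(D_n,m)` to the vertex set of
`Γ(D_N,1)`, where `N = n*m−m+1`:  `σ'(i,j) = (i*m, j*m)` if `j ∉ {0,0̄}`, or if
`j ∈ {0,0̄}`, `m` is odd and `n` is even; otherwise, with `i.val` the standard
representative of `i`, `σ'(i,j) = (i*m, j*m)` if `⌊i*m/N⌋` is even and
`σ'(i,j) = (i*m, (j̄)*m)` if `⌊i*m/N⌋` is odd (with the conventions
`0*m = 0` and `0̄*m = 0̄`). -/
def DSigma (n m : ℕ) : ZMod (n * m - m + 1) × DLab → ZMod (n * m - m + 1) × DLab :=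
  fun v =>
    match v with
    | (i, DLab.pos j) => (i * (m : ZMod (n * m - m + 1)), DLab.pos (j * m))
    | (i, DLab.z b) =>
        if m % 2 = 1 ∧ n % 2 = 0 then
          (i * (m : ZMod (n * m - m + 1)), DLab.z b)
        else if (i.val * m) / (n * m - m + 1) % 2 = 0 then
          (i * (m : ZMod (n * m - m + 1)), DLab.z b)
        else
          (i * (m : ZMod (n * m - m + 1)), DLab.z (!b))

/-- `C` is a connected component of the quiver with arrow relation `A`:
it is nonempty, closed under arrows in both directions, and any two of its
vertices are connected by an unoriented path. -/
def IsConnComponent {α : Type*} (A : α → α → Prop) (C : Set α) : Prop :=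
  C.Nonempty ∧ (∀ x ∈ C, ∀ y, (A x y ∨ A y x) → y ∈ C) ∧
    ∀ x ∈ C, ∀ y ∈ C, Relation.ReflTransGen (fun a b => A a b ∨ A b a) x y

/-- The set `X_k = {(i, j) : j ∈ {k, m+k, …, (n−2)m+k}}`. -/
def XSet (N n m k : ℕ) : Set (ZMod N × DLab) :=
  {v | ∃ (i : ZMod N) (l : ℕ), l ≤ n - 2 ∧ v = (i, DLab.pos (l * m + k))}

/-- Vertex set `ℤ/N × {1, …, h}` of the translation quiver `Γ(A_h, N)`
(the Auslander–Reiten quiver of `D^b(A_h)/τ^N`). -/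
def AVertex (N h : ℕ) : Set (ZMod N × ℕ) :=
  {v | 1 ≤ v.2 ∧ v.2 ≤ h}

/-- Arrows of `Γ(A_h, N)`: `(i,j) → (i,j−1)` for `2 ≤ j ≤ h` and
`(i,j) → (i+1,j+1)` for `1 ≤ j ≤ h−1`. -/
inductive AArrow (N h : ℕ) : ZMod N × ℕ → ZMod N × ℕ → Prop
  | down (i : ZMod N) (j : ℕ) (h1 : 2 ≤ j) (h2 : j ≤ h) :
      AArrow N h (i, j) (i, j - 1)
  | up (i : ZMod N) (j : ℕ) (h1 : 1 ≤ j) (h2 : j + 1 ≤ h) :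
      AArrow N h (i, j) (i + 1, j + 1)

/-- Translation of `Γ(A_h, N)`: `(i,j) ↦ (i−1, j)`. -/
def ATau (N : ℕ) (v : ZMod N × ℕ) : ZMod N × ℕ := (v.1 - 1, v.2)

/-- Tagged arcs in the punctured `N`-gon: `TArc.arc i k` is the arc
`D_{i, i+1+k*m}` (for `1 ≤ k ≤ n−2`), and `TArc.tag i b` is the tagged arc
`D_{ii}^+` (for `b = false`) or `D_{ii}^-` (for `b = true`). -/
inductive TArc (N : ℕ) : Type
  | arc : ZMod N → ℕ → TArc N
  | tag : ZMod N → Bool → TArc N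

/-- The set of tagged `m`-arcs: arcs `D_{i,i+1+k*m}` with `1 ≤ k ≤ n−2`
together with all tagged arcs `D_{ii}^±`. -/
def TArcSet (N n : ℕ) : Set (TArc N) :=
  {a | ∀ (i : ZMod N) (k : ℕ), a = TArc.arc i k → 1 ≤ k ∧ k ≤ n - 2}

/-- The `m`-moves between tagged `m`-arcs, i.e. the arrows of `Γ_⊙(n,m)`:
`D_{i,i+1+km} → D_{i,i+1+(k+1)m}` for `1 ≤ k ≤ n−3`;
`D_{i,i+1+km} → D_{i+m,i+1+km} = D_{i+m,(i+m)+1+(k−1)m}` for `2 ≤ k ≤ n−2`;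
`D_{i,i+1+(n−2)m} → D_{ii}^±`; and
`D_{ii}^± → D_{i+m,i} = D_{i+m,(i+m)+1+(n−2)m}`. -/
inductive MMove (N n m : ℕ) : TArc N → TArc N → Prop
  | extend (i : ZMod N) (k : ℕ) (h1 : 1 ≤ k) (h2 : k ≤ n - 3) :
      MMove N n m (TArc.arc i k) (TArc.arc i (k + 1))
  | rotate (i : ZMod N) (k : ℕ) (h1 : 2 ≤ k) (h2 : k ≤ n - 2) :
      MMove N n m (TArc.arc i k) (TArc.arc (i + (m : ZMod N)) (k - 1))
  | toTag (i : ZMod N) (b : Bool) :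
      MMove N n m (TArc.arc i (n - 2)) (TArc.tag i b)
  | fromTag (i : ZMod N) (b : Bool) :
      MMove N n m (TArc.tag i b) (TArc.arc (i + (m : ZMod N)) (n - 2))

/-- The map `τ_m` on tagged `m`-arcs: `D_{i,i+1+km} ↦ D_{i−m,(i−m)+1+km}` and
`D_{ii}^± ↦ D_{i−m,i−m}^±` if `m` is even, `D_{ii}^± ↦ D_{i−m,i−m}^∓` if `m`
is odd. -/
def TauArc (N m : ℕ) : TArc N → TArc N
  | .arc i k => .arc (i - (m : ZMod N)) k
  | .tag i b => .tag (i - (m : ZMod N)) (if m % 2 = 1 then !b else b)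

/-- Level of a label: `0` for `z b`, `j` for `pos j`. -/
def dlvl : DLab → ℕ
  | .z _ => 0
  | .pos j => j

lemma darrow_cases {N h : ℕ} {a b : ZMod N × DLab} (H : DArrow N h a b) :
    (∃ i j, 2 ≤ j ∧ j ≤ h - 2 ∧ a = (i, DLab.pos j) ∧ b = (i, DLab.pos (j-1))) ∨
    (∃ i c, a = (i, DLab.pos 1) ∧ b = (i, DLab.z c)) ∨
    (∃ i c, a = (i, DLab.z c) ∧ b = (i+1, DLab.pos 1)) ∨
    (∃ i j, 1 ≤ j ∧ j + 1 ≤ h - 2 ∧ a = (i, DLab.pos j) ∧ b = (i+1, DLab.pos (j+1))) := by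
  cases H with
  | down i j h1 h2 => exact Or.inl ⟨i, j, h1, h2, rfl, rfl⟩
  | toZ i c => exact Or.inr (Or.inl ⟨i, c, rfl, rfl⟩)
  | fromZ i c => exact Or.inr (Or.inr (Or.inl ⟨i, c, rfl, rfl⟩))
  | up i j h1 h2 => exact Or.inr (Or.inr (Or.inr ⟨i, j, h1, h2, rfl, rfl⟩))

lemma darrow_lvl {N : ℕ} {a b : ZMod N × DLab} (h : DArrow N N a b) :
    dlvl a.2 = dlvl b.2 + 1 ∨ dlvl b.2 = dlvl a.2 + 1 := by
  rcases darrow_cases h with ⟨i, j, h1, h2, e1, e2⟩ | ⟨i, c, e1, e2⟩ |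
    ⟨i, c, e1, e2⟩ | ⟨i, j, h1, h2, e1, e2⟩ <;>
      rw [e1, e2] <;> simp [dlvl] <;> omega

lemma darrow_target {N : ℕ} (hN : 3 ≤ N) {a b : ZMod N × DLab}
    (h : DArrow N N a b) : b ∈ DVertex N N := by
  intro j' hj'
  rcases darrow_cases h with ⟨i, j, h1, h2, e1, e2⟩ | ⟨i, c, e1, e2⟩ |
    ⟨i, c, e1, e2⟩ | ⟨i, j, h1, h2, e1, e2⟩
  · rw [e2] at hj'
    simp only [DLab.pos.injEq] at hj'
    omega
  · rw [e2] at hj'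
    cases hj'
  · rw [e2] at hj'
    simp only [DLab.pos.injEq] at hj'
    omega
  · rw [e2] at hj'
    simp only [DLab.pos.injEq] at hj'
    omega

lemma down_step {N m : ℕ} {p : ℕ → ZMod N × DLab} (hp : IsRestricted N m p)
    (k : ℕ) (hk : k + 2 ≤ m)
    (hd : dlvl (p k).2 = dlvl (p (k+1)).2 + 1) :
    dlvl (p (k+1)).2 = dlvl (p (k+2)).2 + 1 := by
  have A1 : DArrow N N (p k) (p (k+1)) := hp.1.1 k (by omega)
  have A2 : DArrow N N (p (k+1)) (p (k+2)) := hp.1.1 (k+1) (by omega)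
  have hsec : DTau N N (p (k+2)) ≠ p k := hp.1.2 (k+1) (by omega) (by omega)
  rcases darrow_cases A2 with ⟨i, j, h1, h2, e1, e2⟩ | ⟨i, c, e1, e2⟩ |
    ⟨i, c, e1, e2⟩ | ⟨i, j, h1, h2, e1, e2⟩
  · rw [e1, e2]; simp [dlvl]; omega
  · rw [e1, e2]; simp [dlvl]
  · -- p (k+1) = (i, z c), p (k+2) = (i+1, pos 1): previous arrow must be toZ
    exfalso
    rcases darrow_cases A1 with ⟨i2, j2, g1, g2, f1, f2⟩ | ⟨i2, c2, f1, f2⟩ |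
      ⟨i2, c2, f1, f2⟩ | ⟨i2, j2, g1, g2, f1, f2⟩
    · rw [e1] at f2; simp at f2
    · rw [e1] at f2
      simp only [Prod.mk.injEq] at f2
      apply hsec
      rw [e2, f1, f2.1]
      simp [DTau, add_sub_cancel_right]
    · rw [e1] at f2; simp at f2
    · rw [e1] at f2; simp at f2
  · -- p (k+1) = (i, pos j), p (k+2) = (i+1, pos (j+1))
    exfalso
    rcases darrow_cases A1 with ⟨i2, j2, g1, g2, f1, f2⟩ | ⟨i2, c2, f1, f2⟩ |
      ⟨i2, c2, f1, f2⟩ | ⟨i2, j2, g1, g2, f1, f2⟩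
    · rw [e1] at f2
      simp only [Prod.mk.injEq, DLab.pos.injEq] at f2
      have hj2 : j2 = j + 1 := by
        rw [f1, e1] at hd; simp [dlvl] at hd; omega
      apply hsec
      rw [e2, f1, f2.1, hj2]
      simp [DTau, add_sub_cancel_right]
    · rw [e1] at f2; simp at f2
    · rw [f1, e1] at hd; simp [dlvl] at hd
    · rw [f1, e1] at hd
      rw [e1] at f2
      simp only [Prod.mk.injEq, DLab.pos.injEq] at f2
      simp [dlvl] at hd
      omega

lemma up_step {N m : ℕ} {p : ℕ → ZMod N × DLab} (hp : IsRestricted N m p)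
    (k : ℕ) (hk : k + 2 ≤ m)
    (hu : dlvl (p (k+1)).2 = dlvl (p k).2 + 1)
    (hd : dlvl (p (k+1)).2 = dlvl (p (k+2)).2 + 1) :
    k + 2 = m ∧ ∃ b, (p (k+2)).2 = DLab.z b := by
  have A1 : DArrow N N (p k) (p (k+1)) := hp.1.1 k (by omega)
  have A2 : DArrow N N (p (k+1)) (p (k+2)) := hp.1.1 (k+1) (by omega)
  have hsec : DTau N N (p (k+2)) ≠ p k := hp.1.2 (k+1) (by omega) (by omega)
  rcases darrow_cases A2 with ⟨i, j, h1, h2, e1, e2⟩ | ⟨i, c, e1, e2⟩ |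
    ⟨i, c, e1, e2⟩ | ⟨i, j, h1, h2, e1, e2⟩
  · -- A2 down: p (k+1) = (i, pos j), p (k+2) = (i, pos (j-1))
    exfalso
    rcases darrow_cases A1 with ⟨i2, j2, g1, g2, f1, f2⟩ | ⟨i2, c2, f1, f2⟩ |
      ⟨i2, c2, f1, f2⟩ | ⟨i2, j2, g1, g2, f1, f2⟩
    · rw [f1, e1] at hu
      rw [e1] at f2
      simp only [Prod.mk.injEq, DLab.pos.injEq] at f2
      simp [dlvl] at hu
      omega
    · rw [e1] at f2; simp at f2
    · rw [e1] at f2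
      simp only [Prod.mk.injEq, DLab.pos.injEq] at f2
      omega
    · rw [e1] at f2
      simp only [Prod.mk.injEq, DLab.pos.injEq] at f2
      apply hsec
      rw [e2, f1]
      have hi2 : i2 = i - 1 := eq_sub_of_add_eq f2.1.symm
      have hj2 : j2 = j - 1 := by omega
      simp [DTau, add_sub_cancel_right, hi2, hj2]
  · -- A2 toZ: p (k+1) = (i, pos 1), p (k+2) = (i, z c)
    rcases darrow_cases A1 with ⟨i2, j2, g1, g2, f1, f2⟩ | ⟨i2, c2, f1, f2⟩ |
      ⟨i2, c2, f1, f2⟩ | ⟨i2, j2, g1, g2, f1, f2⟩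
    · exfalso
      rw [f1, e1] at hu; simp [dlvl] at hu
      rw [e1] at f2
      simp only [Prod.mk.injEq, DLab.pos.injEq] at f2
      omega
    · exfalso; rw [e1] at f2; simp at f2
    · -- A1 fromZ: p k = (i2, z c2), p (k+1) = (i2+1, pos 1)
      rw [e1] at f2
      simp only [Prod.mk.injEq] at f2
      have hi2 : i2 = i - 1 := eq_sub_of_add_eq f2.1.symm
      -- restrictedness forces c = c2
      have hpk : p k = (i - 1, DLab.z c2) := by rw [f1, hi2]
      have hcc : c = c2 := by
        by_contra hne
        apply hp.2
        refine ⟨k+1, by omega, by omega, i, ?_⟩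
        cases c <;> cases c2 <;> simp at hne <;>
          first
          | exact Or.inl ⟨e2, hpk⟩
          | exact Or.inr ⟨e2, hpk⟩
      -- sectionality forces the flip, i.e. i = 0 and N odd
      have hflip : i = 0 ∧ N % 2 = 1 := by
        by_contra hni
        apply hsec
        rw [e2, f1, hi2, hcc]
        simp [DTau, hni]
      -- then the path cannot continue
      constructor
      · by_contra hlt
        have A3 : DArrow N N (p (k+2)) (p (k+3)) := hp.1.1 (k+2) (by omega)
        have hsec2 : DTau N N (p (k+3)) ≠ p (k+1) :=
          hp.1.2 (k+2) (by omega) (by omega)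
        rcases darrow_cases A3 with ⟨i3, j3, g1, g2, f1', f2'⟩ | ⟨i3, c3, f1', f2'⟩ |
          ⟨i3, c3, f1', f2'⟩ | ⟨i3, j3, g1, g2, f1', f2'⟩
        · rw [e2] at f1'; simp at f1'
        · rw [e2] at f1'; simp at f1'
        · rw [e2] at f1'
          simp only [Prod.mk.injEq] at f1'
          apply hsec2
          rw [f2', e1, f1'.1]
          simp [DTau, add_sub_cancel_right]
        · rw [e2] at f1'; simp at f1'
      · exact ⟨c, by rw [e2]⟩
    · exfalso
      rw [e1] at f2
      simp only [Prod.mk.injEq, DLab.pos.injEq] at f2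
      omega
  · -- A2 fromZ: contradicts hd
    exfalso
    rw [e1, e2] at hd; simp [dlvl] at hd
  · -- A2 up: contradicts hd
    exfalso
    rw [e1, e2] at hd; simp [dlvl] at hd; omega

/-- For `n ≥ 3`, `m ≥ 1` and `N = n*m−m+1`: if `x ∈ V` and
there is a restricted sectional path of length `m` in `Γ(D_N,1)` from `x` to
`y`, then `y ∈ V`. -/
theorem V_closed_under_restricted_paths (n m N : ℕ) (hn : 3 ≤ n) (hm : 1 ≤ m)
    (hN : N = n * m - m + 1) (x y : ZMod N × DLab)
    (hx : x ∈ VSet N m) (hxy : RSPath N m x y) :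
    y ∈ VSet N m := by
  obtain ⟨p, hp, hx0, hxm⟩ := hxy
  have hN3 : 3 ≤ N := by
    have h1 : 3 * m ≤ n * m := Nat.mul_le_mul_right m hn
    omega
  -- y is the target of the last arrow, hence in the vertex set
  have hlast : DArrow N N (p (m-1)) (p m) := by
    have := hp.1.1 (m-1) (by omega)
    have hms : m - 1 + 1 = m := by omega
    rwa [hms] at this
  have hyV : y ∈ DVertex N N := by rw [← hxm]; exact darrow_target hN3 hlast
  -- if y has a `z` label we are done
  rcases hy : y.2 with b | jy
  · exact ⟨hyV, fun j hj => by rw [hy] at hj; cases hj⟩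
  -- otherwise show m ∣ jy
  refine ⟨hyV, fun j hj => ?_⟩
  rw [hy] at hj
  injection hj with hj
  subst hj
  have hmx : m ∣ dlvl x.2 := by
    rcases hx2 : x.2 with b | jx
    · simp [dlvl]
    · have := hx.2 jx hx2
      simpa [dlvl] using this
  have A0 := hp.1.1 0 (by omega)
  rcases darrow_lvl A0 with h0 | h0
  · -- all steps go down
    have key : ∀ k, k + 1 ≤ m → dlvl (p k).2 = dlvl (p (k+1)).2 + 1 := by
      intro k
      induction k with
      | zero => intro _; exact h0
      | succ k ih =>
          intro h
          exact down_step hp k (by omega) (ih (by omega))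
    have tot : ∀ k, k ≤ m → dlvl (p 0).2 = dlvl (p k).2 + k := by
      intro k
      induction k with
      | zero => intro _; rfl
      | succ k ih =>
          intro h
          have h1 := key k (by omega)
          have h2 := ih (by omega)
          omega
    have heq : dlvl x.2 = jy + m := by
      have := tot m le_rfl
      rw [hx0, hxm, hy] at this
      simpa [dlvl] using this
    obtain ⟨c, hc⟩ := hmx
    rcases c with _ | c
    · omega
    · refine ⟨c, ?_⟩
      rw [Nat.mul_succ] at hc
      omega
  · -- all steps go up
    have key : ∀ k, k + 1 ≤ m → dlvl (p (k+1)).2 = dlvl (p k).2 + 1 := by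
      intro k
      induction k with
      | zero => intro _; exact h0
      | succ k ih =>
          intro h
          have hu := ih (by omega)
          rcases darrow_lvl (hp.1.1 (k+1) (by omega)) with hdn | hup
          · exfalso
            obtain ⟨hkm, b, hb⟩ := up_step hp k (by omega) hu hdn
            rw [hkm, hxm, hy] at hb
            cases hb
          · exact hup
    have tot : ∀ k, k ≤ m → dlvl (p k).2 = dlvl (p 0).2 + k := by
      intro k
      induction k with
      | zero => intro _; rfl
      | succ k ih =>
          intro h
          have h1 := key k (by omega)
          have h2 := ih (by omega)
          omega
    have heq : jy = dlvl x.2 + m := by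
      have := tot m le_rfl
      rw [hx0, hxm, hy] at this
      simpa [dlvl] using this
    rw [heq]
    exact dvd_add hmx ⟨1, (mul_one m).symm⟩
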